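/- For the transient Markov chain main theorem, the upper bound is attained by the normalized hitting measure: if τ is the first hitting time of Λ and ν(x) = P_ρ[X_τ = x], then the normalized measure ν/ν(Λ) has K-energy exactly 1/ν(Λ), i.e., I_K(ν/ν(Λ)) = ν(Λ)^{-1}, where K is the Martin kernel K(x,y) = G(x,y)/G(ρ,y). -/

import Mathlib

/-!
Splitting a visit to `y ∈ Λ` at the first entrance into `Λ` and applying the Markov property
there gives the first-entrance decomposition `∑_{x ∈ Λ} G(x,y) ν(x) = G(ρ,y)`: the `K`-potential
of `ν` is `1` at every point charged by `ν`. Integrating it against `ν` gives `I_K(ν) = ν(Λ)`,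
and normalizing `ν` divides the energy by `ν(Λ)²`.
-/

open MeasureTheory ENNReal
open scoped Classical
open Function

section Cylinders

variable {Y : Type*}

def prefixCylinder (n : ℕ) (f : ℕ → Y) : Set (ℕ → Y) := {ω | ∀ i ≤ n, ω i = f i}

def IsDeterminedUpTo (n : ℕ) (A : Set (ℕ → Y)) : Prop :=
  ∀ ⦃ω ω' : ℕ → Y⦄, (∀ i ≤ n, ω i = ω' i) → ω ∈ A → ω' ∈ A

namespace IsDeterminedUpTo

variable {m n : ℕ} {A : Set (ℕ → Y)}

lemma mono (hA : IsDeterminedUpTo m A) (hmn : m ≤ n) : IsDeterminedUpTo n A :=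
  fun _ _ h => hA fun i hi => h i (hi.trans hmn)

lemma prefixCylinder_inter (hA : IsDeterminedUpTo n A) (f : ℕ → Y) :
    prefixCylinder n f ∩ A = if f ∈ A then prefixCylinder n f else ∅ := by
  split_ifs with hf
  · exact Set.inter_eq_left.2 fun ω hω => hA (fun i hi => (hω i hi).symm) hf
  · exact Set.eq_empty_of_forall_notMem fun ω ⟨hω, hωA⟩ => hf (hA hω hωA)

end IsDeterminedUpTo

lemma isDeterminedUpTo_eval {k n : ℕ} (hkn : k ≤ n) (y : Y) :
    IsDeterminedUpTo n {ω : ℕ → Y | ω k = y} :=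
  fun _ _ h hω => (h k hkn).symm.trans hω

-- `Fin (n + 1) → Y` is countable, so these cylinders partition path space countably.
def extendFin (n : ℕ) (g : Fin (n + 1) → Y) : ℕ → Y := fun i => g ⟨min i n, by omega⟩

lemma iUnion_prefixCylinder_extendFin (n : ℕ) :
    ⋃ g : Fin (n + 1) → Y, prefixCylinder n (extendFin n g) = Set.univ :=
  Set.eq_univ_of_forall fun ω => Set.mem_iUnion.2
    ⟨fun i => ω i, fun i hi => by simp [extendFin, min_eq_left hi]⟩

lemma pairwise_disjoint_prefixCylinder_extendFin (n : ℕ) :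
    Pairwise (Disjoint on fun g : Fin (n + 1) → Y => prefixCylinder n (extendFin n g)) := by
  refine fun g g' hne => Set.disjoint_left.2 fun ω hω hω' => hne (funext fun i => ?_)
  have hi : (i : ℕ) ≤ n := Nat.lt_succ_iff.1 i.2
  simpa [extendFin, min_eq_left hi] using (hω i hi).symm.trans (hω' i hi)

variable [MeasurableSpace Y] [MeasurableSingletonClass Y]

lemma measurableSet_prefixCylinder (n : ℕ) (f : ℕ → Y) : MeasurableSet (prefixCylinder n f) := by
  simp only [prefixCylinder, Set.ofPred_forall]
  exact .iInter fun i => .iInter fun _ => measurable_pi_apply i (measurableSet_singleton _)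

variable [Countable Y]

lemma IsDeterminedUpTo.measurableSet {n : ℕ} {A : Set (ℕ → Y)} (hA : IsDeterminedUpTo n A) :
    MeasurableSet A := by
  rw [← Set.univ_inter A, ← iUnion_prefixCylinder_extendFin n, Set.iUnion_inter]
  refine .iUnion fun g => ?_
  rw [hA.prefixCylinder_inter]
  split_ifs
  exacts [measurableSet_prefixCylinder n _, .empty]

lemma measure_eq_tsum_prefixCylinder (μ : Measure (ℕ → Y)) (n : ℕ) {E : Set (ℕ → Y)}
    (hE : MeasurableSet E) :
    μ E = ∑' g : Fin (n + 1) → Y, μ (prefixCylinder n (extendFin n g) ∩ E) := by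
  rw [← measure_iUnion (fun g g' hne => ((pairwise_disjoint_prefixCylinder_extendFin n hne).mono
      Set.inter_subset_left Set.inter_subset_left))
      fun g => (measurableSet_prefixCylinder n _).inter hE,
    ← Set.iUnion_inter, iUnion_prefixCylinder_extendFin, Set.univ_inter]

end Cylinders

section MarkovChain

variable {Y : Type*} [MeasurableSpace Y]

def HasCylinderLaw (p : Y → Y → ℝ≥0∞) (P : Y → Measure (ℕ → Y)) : Prop :=
  ∀ (x : Y) (f : ℕ → Y) (n : ℕ), P x {ω | ∀ i ≤ n, ω i = f i} =
    (if f 0 = x then 1 else 0) * ∏ i ∈ Finset.range n, p (f i) (f (i + 1))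

namespace HasCylinderLaw

variable {p : Y → Y → ℝ≥0∞} {P : Y → Measure (ℕ → Y)}

lemma measure_eval_zero (hP : HasCylinderLaw p P) (x y : Y) :
    P x {ω | ω 0 = y} = if y = x then 1 else 0 := by
  simpa using hP x (fun _ => y) 0

lemma measure_prefixCylinder_inter_eval_succ (hP : HasCylinderLaw p P) (x : Y) (f : ℕ → Y)
    (n : ℕ) (y : Y) :
    P x (prefixCylinder n f ∩ {ω | ω (n + 1) = y}) = P x (prefixCylinder n f) * p (f n) y := by
  set f' := Function.update f (n + 1) y
  have hf' : ∀ i ≤ n, f' i = f i := fun i hi => Function.update_of_ne (by omega) _ _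
  have hset : prefixCylinder n f ∩ {ω | ω (n + 1) = y} = prefixCylinder (n + 1) f' := by
    ext ω
    simp only [prefixCylinder, Set.mem_inter_iff, Set.mem_ofPred_eq, Nat.le_succ_iff_eq_or_le]
    constructor
    · rintro ⟨h, hy⟩ i (rfl | hi)
      · simpa [f'] using hy
      · exact (h i hi).trans (hf' i hi).symm
    · intro h
      exact ⟨fun i hi => (h i (.inr hi)).trans (hf' i hi), (h _ (.inl rfl)).trans (by simp [f'])⟩
  rw [hset, prefixCylinder, prefixCylinder, hP, hP, Finset.prod_range_succ,
    Finset.prod_congr rfl fun i hi => by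
      rw [hf' i (Finset.mem_range.1 hi).le, hf' (i + 1) (Finset.mem_range.1 hi)],
    hf' 0 n.zero_le, hf' n le_rfl, mul_assoc]
  simp [f']

variable [MeasurableSingletonClass Y] [Countable Y]

lemma measure_inter_eval_succ (hP : HasCylinderLaw p P) {n : ℕ} {A : Set (ℕ → Y)}
    (hA : IsDeterminedUpTo n A) (x y : Y) :
    P x (A ∩ {ω | ω (n + 1) = y}) = ∑' z, P x (A ∩ {ω | ω n = z}) * p z y := by
  have hE : ∀ k z, MeasurableSet (A ∩ {ω : ℕ → Y | ω k = z}) := fun k z =>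
    hA.measurableSet.inter (isDeterminedUpTo_eval le_rfl z).measurableSet
  simp_rw [measure_eq_tsum_prefixCylinder (P x) n (hE _ _), ← ENNReal.tsum_mul_right]
  rw [ENNReal.tsum_comm]
  refine tsum_congr fun g => ?_
  set f := extendFin n g
  simp_rw [← Set.inter_assoc, hA.prefixCylinder_inter]
  split_ifs
  · simp_rw [measure_prefixCylinder_inter_eval_succ hP,
      (isDeterminedUpTo_eval le_rfl _).prefixCylinder_inter, Set.mem_ofPred_eq, apply_ite (P x),
      measure_empty, ite_mul, zero_mul, eq_comm (a := f n)]
    rw [tsum_ite_eq]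
  · simp

theorem measure_inter_eval_add (hP : HasCylinderLaw p P) {k : ℕ} {A : Set (ℕ → Y)} {x : Y}
    (hA : IsDeterminedUpTo k A) (hAx : A ⊆ {ω | ω k = x}) (ρ : Y) (m : ℕ) (y : Y) :
    P ρ (A ∩ {ω | ω (k + m) = y}) = P ρ A * P x {ω | ω m = y} := by
  -- both sides satisfy the same one-step recursion in `m`
  induction m generalizing y with
  | zero =>
    rw [hP.measure_eval_zero, add_zero]
    split_ifs with hyx
    · rw [hyx, Set.inter_eq_left.2 hAx, mul_one]
    · have hempty : A ∩ {ω | ω k = y} = ∅ :=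
        Set.eq_empty_of_forall_notMem fun ω hω => hyx (hω.2.symm.trans (hAx hω.1))
      rw [hempty, measure_empty, mul_zero]
  | succ m ih =>
    have hstep := hP.measure_inter_eval_succ (A := Set.univ) (n := m) (fun _ _ _ h => h) x y
    simp only [Set.univ_inter] at hstep
    rw [← add_assoc, hP.measure_inter_eval_succ (hA.mono (Nat.le_add_right k m)), hstep,
      ← ENNReal.tsum_mul_left]
    exact tsum_congr fun z => by rw [ih, mul_assoc]

end HasCylinderLaw

end MarkovChain

section FirstEntrance

variable {Y : Type*} {Λ : Set Y}

def firstEntrance (Λ : Set Y) (k : ℕ) (x : Y) : Set (ℕ → Y) :=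
  {ω | ω k = x ∧ ∀ j < k, ω j ∉ Λ}

lemma isDeterminedUpTo_firstEntrance (k : ℕ) (x : Y) :
    IsDeterminedUpTo k (firstEntrance Λ k x) := by
  rintro ω ω' h ⟨hk, hj⟩
  exact ⟨(h k le_rfl).symm.trans hk, fun j hjk => h j hjk.le ▸ hj j hjk⟩

lemma firstEntrance_subset_eval (k : ℕ) (x : Y) : firstEntrance Λ k x ⊆ {ω | ω k = x} :=
  fun _ hω => hω.1

lemma firstEntrance_inter_eval_eq_empty {k n : ℕ} (hnk : n < k) (x : Y) {y : Y} (hy : y ∈ Λ) :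
    firstEntrance Λ k x ∩ {ω | ω n = y} = ∅ :=
  Set.eq_empty_of_forall_notMem fun _ ⟨⟨_, hj⟩, hn⟩ => hj n hnk (hn ▸ hy)

lemma pairwise_disjoint_firstEntrance :
    Pairwise (Disjoint on fun q : ℕ × Λ => firstEntrance Λ q.1 q.2) := by
  have entrance_le : ∀ {k k' : ℕ} {x x' : Λ} {ω : ℕ → Y},
      ω ∈ firstEntrance Λ k x → ω ∈ firstEntrance Λ k' x' → k ≤ k' :=
    fun {_ _ _ x' _} hω hω' => not_lt.1 fun hlt => hω.2 _ hlt (hω'.1 ▸ x'.2)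
  refine fun q q' hne => Set.disjoint_left.2 fun ω hω hω' => hne ?_
  have hk : q.1 = q'.1 := le_antisymm (entrance_le hω hω') (entrance_le hω' hω)
  exact Prod.ext hk (Subtype.ext (hω.1.symm.trans (hk ▸ hω'.1)))

lemma setOf_eval_eq_iUnion_firstEntrance {y : Y} (hy : y ∈ Λ) (n : ℕ) :
    {ω : ℕ → Y | ω n = y} = ⋃ q : ℕ × Λ, firstEntrance Λ q.1 q.2 ∩ {ω | ω n = y} := by
  ext ω
  simp only [Set.mem_iUnion, Set.mem_inter_iff]
  refine ⟨fun hωn => ?_, fun ⟨_, _, hωn⟩ => hωn⟩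
  have hvisit : ∃ k, ω k ∈ Λ := ⟨n, hωn ▸ hy⟩
  exact ⟨(Nat.find hvisit, ⟨_, Nat.find_spec hvisit⟩),
    ⟨rfl, fun j hj => Nat.find_min hvisit hj⟩, hωn⟩

variable [MeasurableSpace Y]

def hittingDistribution (μ : Measure (ℕ → Y)) (Λ : Set Y) (x : Y) : ℝ≥0∞ :=
  μ {ω | ∃ n, ω n = x ∧ ∀ m < n, ω m ∉ Λ}

variable [MeasurableSingletonClass Y] [Countable Y] (μ : Measure (ℕ → Y))

lemma measure_eval_eq_tsum_firstEntrance {y : Y} (hy : y ∈ Λ) (n : ℕ) :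
    μ {ω | ω n = y} = ∑' q : ℕ × Λ, μ (firstEntrance Λ q.1 q.2 ∩ {ω | ω n = y}) := by
  conv_lhs => rw [setOf_eval_eq_iUnion_firstEntrance hy n]
  exact measure_iUnion (fun q q' hne => (pairwise_disjoint_firstEntrance (Λ := Λ) hne).mono
    Set.inter_subset_left Set.inter_subset_left) fun q =>
    (isDeterminedUpTo_firstEntrance q.1 q.2.1).measurableSet.inter
      (isDeterminedUpTo_eval le_rfl y).measurableSet

lemma hittingDistribution_eq_tsum {x : Y} (hx : x ∈ Λ) :
    hittingDistribution μ Λ x = ∑' k, μ (firstEntrance Λ k x) := by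
  have hunion : {ω : ℕ → Y | ∃ n, ω n = x ∧ ∀ m < n, ω m ∉ Λ} = ⋃ k, firstEntrance Λ k x := by
    ext ω; simp [firstEntrance]
  rw [hittingDistribution, hunion]
  exact measure_iUnion (pairwise_disjoint_firstEntrance.comp_of_injective
    (f := fun k => (k, ⟨x, hx⟩)) fun _ _ h => congrArg Prod.fst h) fun k =>
    (isDeterminedUpTo_firstEntrance k x).measurableSet

lemma tsum_hittingDistribution_le_one [IsProbabilityMeasure μ] :
    ∑' x : Λ, hittingDistribution μ Λ x ≤ 1 := by
  calc ∑' x : Λ, hittingDistribution μ Λ x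
      = ∑' q : ℕ × Λ, μ (firstEntrance Λ q.1 q.2) := by
        rw [ENNReal.tsum_prod (f := fun k (x : Λ) => μ (firstEntrance Λ k x)), ENNReal.tsum_comm]
        exact tsum_congr fun x => hittingDistribution_eq_tsum μ x.2
    _ = μ (⋃ q : ℕ × Λ, firstEntrance Λ q.1 q.2) :=
        (measure_iUnion pairwise_disjoint_firstEntrance fun q =>
          (isDeterminedUpTo_firstEntrance q.1 q.2.1).measurableSet).symm
    _ ≤ 1 := prob_le_one

end FirstEntrance

section GreenFunction

variable {Y : Type*} [MeasurableSpace Y]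

noncomputable def greenFunction (P : Y → Measure (ℕ → Y)) (x y : Y) : ℝ≥0∞ :=
  ∑' n, P x {ω | ω n = y}

lemma hittingDistribution_le_greenFunction (P : Y → Measure (ℕ → Y)) (Λ : Set Y) (x y : Y) :
    hittingDistribution (P x) Λ y ≤ greenFunction P x y := by
  refine (measure_mono ?_).trans (measure_iUnion_le _)
  rintro ω ⟨n, hn, -⟩
  exact Set.mem_iUnion.2 ⟨n, hn⟩

variable [MeasurableSingletonClass Y] [Countable Y] {p : Y → Y → ℝ≥0∞}
  {P : Y → Measure (ℕ → Y)} {Λ : Set Y}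

theorem HasCylinderLaw.tsum_greenFunction_mul_hittingDistribution (hP : HasCylinderLaw p P)
    (ρ : Y) {y : Y} (hy : y ∈ Λ) :
    ∑' x : Λ, greenFunction P x y * hittingDistribution (P ρ) Λ x = greenFunction P ρ y := by
  have hvisits : ∀ k (x : Y), ∑' n, P ρ (firstEntrance Λ k x ∩ {ω | ω n = y}) =
      P ρ (firstEntrance Λ k x) * greenFunction P x y := by
    intro k x
    rw [← ENNReal.summable.sum_add_tsum_nat_add' (k := k), Finset.sum_eq_zero fun n hn => by
      rw [firstEntrance_inter_eval_eq_empty (Finset.mem_range.1 hn) x hy, measure_empty],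
      zero_add, greenFunction, ← ENNReal.tsum_mul_left]
    exact tsum_congr fun m => by
      rw [add_comm, hP.measure_inter_eval_add (isDeterminedUpTo_firstEntrance k x)
        (firstEntrance_subset_eval k x)]
  calc ∑' x : Λ, greenFunction P x y * hittingDistribution (P ρ) Λ x
      = ∑' x : Λ, ∑' k, ∑' n, P ρ (firstEntrance Λ k x ∩ {ω | ω n = y}) := by
        refine tsum_congr fun x => ?_
        rw [hittingDistribution_eq_tsum _ x.2, mul_comm, ← ENNReal.tsum_mul_right]
        exact tsum_congr fun k => (hvisits k x).symm
    _ = ∑' n, ∑' q : ℕ × Λ, P ρ (firstEntrance Λ q.1 q.2 ∩ {ω | ω n = y}) := by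
        rw [ENNReal.tsum_comm, ← ENNReal.tsum_prod (f := fun k (x : Λ) => ∑' n,
          P ρ (firstEntrance Λ k x ∩ {ω | ω n = y})), ENNReal.tsum_comm]
    _ = greenFunction P ρ y :=
        tsum_congr fun n => (measure_eval_eq_tsum_firstEntrance (P ρ) hy n).symm

theorem HasCylinderLaw.tsum_martinKernel_mul_hittingDistribution (hP : HasCylinderLaw p P)
    (ρ : Y) {y : Y} (hy : y ∈ Λ) (hν : hittingDistribution (P ρ) Λ y ≠ 0)
    (hG : greenFunction P ρ y ≠ ∞) :
    ∑' x : Λ, greenFunction P x y / greenFunction P ρ y * hittingDistribution (P ρ) Λ x = 1 := by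
  have hG₀ : greenFunction P ρ y ≠ 0 :=
    fun h => hν (nonpos_iff_eq_zero.1 (h ▸ hittingDistribution_le_greenFunction P Λ ρ y))
  simp_rw [div_eq_mul_inv, mul_right_comm _ (greenFunction P ρ y)⁻¹]
  rw [ENNReal.tsum_mul_right, hP.tsum_greenFunction_mul_hittingDistribution ρ hy,
    ENNReal.mul_inv_cancel hG₀ hG]

end GreenFunction

noncomputable def energy {α : Type*} (K : α → α → ℝ≥0∞) (μ : α → ℝ≥0∞) : ℝ≥0∞ :=
  ∑' x, ∑' y, K x y * μ x * μ y

theorem energy_div_tsum_eq_inv {α : Type*} (K : α → α → ℝ≥0∞) (ν : α → ℝ≥0∞)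
    (hpot : ∀ y, ν y ≠ 0 → ∑' x, K x y * ν x = 1) (h₀ : ∑' x, ν x ≠ 0) (hfin : ∑' x, ν x ≠ ∞) :
    energy K (fun x => ν x / ∑' x, ν x) = (∑' x, ν x)⁻¹ := by
  set c := ∑' x, ν x
  have hpot' : ∀ y, (∑' x, K x y * ν x) * ν y = ν y := fun y => by
    by_cases hy : ν y = 0
    · rw [hy, mul_zero]
    · rw [hpot y hy, one_mul]
  calc energy K (fun x => ν x / c)
      = ∑' y, (∑' x, K x y * ν x) * ν y * (c⁻¹ * c⁻¹) := by
        rw [energy, ENNReal.tsum_comm]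
        refine tsum_congr fun y => ?_
        rw [← ENNReal.tsum_mul_right, ← ENNReal.tsum_mul_right]
        refine tsum_congr fun x => ?_
        simp only [div_eq_mul_inv]
        ring
    _ = c * (c⁻¹ * c⁻¹) := by simp_rw [hpot']; exact ENNReal.tsum_mul_right
    _ = c⁻¹ := by rw [← mul_assoc, ENNReal.mul_inv_cancel h₀ hfin, one_mul]

theorem stmt19_general
    (Y : Type*) [Countable Y] [MeasurableSpace Y] [MeasurableSingletonClass Y]
    (p : Y → Y → ℝ≥0∞)
    (P : Y → Measure (ℕ → Y)) (hprob : ∀ x, IsProbabilityMeasure (P x))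
    (hcyl : ∀ (x : Y) (f : ℕ → Y) (n : ℕ),
      P x {ω | ∀ i ≤ n, ω i = f i} =
        (if f 0 = x then 1 else 0) * ∏ i ∈ Finset.range n, p (f i) (f (i + 1)))
    (ρ : Y)
    (G : Y → Y → ℝ≥0∞) (hGdef : ∀ x y, G x y = ∑' n : ℕ, P x {ω | ω n = y})
    (hGfin : ∀ x y, G x y < ∞)
    (K : Y → Y → ℝ≥0∞) (hK : ∀ x y, K x y = G x y / G ρ y)
    (Λ : Set Y)
    (ν : Y → ℝ≥0∞)
    -- `ν x` is the probability that the first entrance of the chain to `Λ` occurs at `x`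
    (hν : ∀ x ∈ Λ, ν x = P ρ {ω | ∃ n, ω n = x ∧ ∀ m < n, ω m ∉ Λ})
    (νΛ : ℝ≥0∞) (hνΛ : νΛ = ∑' x : Λ, ν x) (hpos : 0 < νΛ) :
    ∑' x : Λ, ∑' y : Λ, K x y * (ν x / νΛ) * (ν y / νΛ) = νΛ⁻¹ := by
  obtain rfl : G = greenFunction P := funext₂ hGdef
  have hνhit : ∀ x : Λ, ν x = hittingDistribution (P ρ) Λ x := fun x => hν x x.2
  have hνΛ_le : νΛ ≤ 1 := by
    rw [hνΛ, tsum_congr hνhit]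
    exact tsum_hittingDistribution_le_one (P ρ)
  subst hνΛ
  refine energy_div_tsum_eq_inv (fun x y : Λ => K x y) (fun x : Λ => ν x) (fun y hy => ?_)
    hpos.ne' (hνΛ_le.trans_lt one_lt_top).ne
  simp only [hK, hνhit] at hy ⊢
  exact HasCylinderLaw.tsum_martinKernel_mul_hittingDistribution hcyl ρ y.2 hy (hGfin ρ y).ne

/-- The normalized hitting measure `ν/ν(Λ)` of `Λ` has Martin-kernel energy
exactly `ν(Λ)⁻¹`, where `ν(x) = P_ρ[X_τ = x]` for the first hitting time `τ` of `Λ`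
and `K(x,y) = G(x,y)/G(ρ,y)`. -/
theorem stmt19
    (Y : Type*) [Countable Y] [MeasurableSpace Y] [MeasurableSingletonClass Y]
    (p : Y → Y → ℝ≥0∞) (hp : ∀ x, ∑' y, p x y = 1)
    (P : Y → Measure (ℕ → Y)) (hprob : ∀ x, IsProbabilityMeasure (P x))
    (hcyl : ∀ (x : Y) (f : ℕ → Y) (n : ℕ),
      P x {ω | ∀ i ≤ n, ω i = f i} =
        (if f 0 = x then 1 else 0) * ∏ i ∈ Finset.range n, p (f i) (f (i + 1)))
    (ρ : Y)
    (G : Y → Y → ℝ≥0∞) (hGdef : ∀ x y, G x y = ∑' n : ℕ, P x {ω | ω n = y})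
    (hGfin : ∀ x y, G x y < ∞)
    (K : Y → Y → ℝ≥0∞) (hK : ∀ x y, K x y = G x y / G ρ y)
    (Λ : Set Y)
    (ν : Y → ℝ≥0∞)
    -- `ν x` is the probability that the first entrance of the chain to `Λ` occurs at `x`
    (hν : ∀ x ∈ Λ, ν x = P ρ {ω | ∃ n, ω n = x ∧ ∀ m < n, ω m ∉ Λ})
    (νΛ : ℝ≥0∞) (hνΛ : νΛ = ∑' x : Λ, ν x) (hpos : 0 < νΛ) :
    ∑' x : Λ, ∑' y : Λ, K x y * (ν x / νΛ) * (ν y / νΛ) = νΛ⁻¹ :=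
  stmt19_general Y p P hprob hcyl ρ G hGdef hGfin K hK Λ ν hν νΛ hνΛ hpos
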